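/- Let g : [0, n+1/2] → ℝ be a continuous piecewise-linear function as encoded by a slope sequence (σ_1,…,σ_{n+1}) satisfying conditions (C1) σ_{1,1} = 1 and (C2) σ_{j,2} = 1 ⟹ σ_{j+1,1} = 1, with g(0) = −1/2. Assume M := max g > 0, and let m be such that m + 1/2 = min g⁻¹(M). Then m > 0, σ_m = (1,1), g(m − 1/2) = M − 1, and g(x) ≤ M − 1 for all 0 ≤ x ≤ m − 1/2. -/

import Mathlib

/-- The slope data: `σ_j = (σ_{j,1}, σ_{j,2})` for `1 ≤ j ≤ n` (0-indexed here) and the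
final single slope `σ_{n+1} = σlast`. -/
def sigFull (n : ℕ) (σ : Fin n → ℤ × ℤ) (σlast : ℤ) (j : ℕ) : ℤ × ℤ :=
  if h : j < n then σ ⟨j, h⟩ else (σlast, σlast)

/-- The slope of `g` on the half-integer interval `(t/2, (t+1)/2)`:
`σ_{j,1}` on `(j-1, j-1/2)` and `σ_{j,2}` on `(j-1/2, j)`, and `σ_{n+1}` on `(n, n+1/2)`. -/
def plSlope (n : ℕ) (σ : Fin n → ℤ × ℤ) (σlast : ℤ) (t : ℕ) : ℤ :=
  if t % 2 = 0 then (sigFull n σ σlast (t / 2)).1 else (sigFull n σ σlast (t / 2)).2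

/-- The values of `g` at the half-integer grid points `t/2`, with `g(0) = -1/2`. -/
noncomputable def plVal (n : ℕ) (σ : Fin n → ℤ × ℤ) (σlast : ℤ) : ℕ → ℝ
  | 0 => -1/2
  | t + 1 => plVal n σ σlast t + (plSlope n σ σlast t : ℝ) / 2

/-- The continuous piecewise-linear function `g : [0, n+1/2] → ℝ` with `g(0) = -1/2`
encoded by the slope sequence `(σ_1, …, σ_n, σ_{n+1})`. -/
noncomputable def plFun (n : ℕ) (σ : Fin n → ℤ × ℤ) (σlast : ℤ) (x : ℝ) : ℝ :=
  let t : ℕ := (⌊2 * x⌋).toNat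
  plVal n σ σlast t + (x - t / 2) * (plSlope n σ σlast t : ℝ)

/-!
On the half-integer grid `g` is a walk with steps `±1/2` starting at `g(0) = -1/2`, so
`g(k + 1/2) ∈ ℤ` and `g(k) ∈ ℤ + 1/2`. Hence `M = g(m + 1/2)` is an integer and
`g(k + 1/2) ≤ M - 1` for `k < m`. Conditions (C1), (C2) say that `g` never turns down at an
integer point, so `g(k)` lies `1/2` below a neighbouring value `g(k ± 1/2)`, whence
`g(k) ≤ M - 3/2` for `k < m`. Walking back from `m + 1/2`, the last three steps must therefore
all go up, which gives `σ_m = (1, 1)` and `g(m - 1/2) = M - 1`. Between grid points `g` is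
linear, so the bound `M - 1` on the grid extends to `[0, m - 1/2]`.
-/

variable {n : ℕ} {σ : Fin n → ℤ × ℤ} {σlast : ℤ}

theorem plVal_succ (t : ℕ) :
    plVal n σ σlast (t + 1) = plVal n σ σlast t + (plSlope n σ σlast t : ℝ) / 2 :=
  rfl

theorem plSlope_two_mul (k : ℕ) : plSlope n σ σlast (2 * k) = (sigFull n σ σlast k).1 := by
  simp [plSlope]

theorem plSlope_two_mul_add_one (k : ℕ) :
    plSlope n σ σlast (2 * k + 1) = (sigFull n σ σlast k).2 := by
  simp [plSlope, Nat.add_mod, Nat.add_div]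

theorem plSlope_eq_one_or_neg_one
    (hσ : ∀ j : Fin n, ((σ j).1 = 1 ∨ (σ j).1 = -1) ∧ ((σ j).2 = 1 ∨ (σ j).2 = -1))
    (hlast : σlast = 1 ∨ σlast = -1) (t : ℕ) :
    plSlope n σ σlast t = 1 ∨ plSlope n σ σlast t = -1 := by
  unfold plSlope sigFull
  split_ifs
  exacts [(hσ _).1, hlast, (hσ _).2, hlast]

theorem plSlope_two_mul_add_two_eq_one
    (hC2 : ∀ j < n, (sigFull n σ σlast j).2 = 1 → (sigFull n σ σlast (j + 1)).1 = 1) {j : ℕ}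
    (h : plSlope n σ σlast (2 * j + 1) = 1) : plSlope n σ σlast (2 * j + 2) = 1 := by
  rw [show 2 * j + 2 = 2 * (j + 1) by ring, plSlope_two_mul]
  rw [plSlope_two_mul_add_one] at h
  by_cases hj : j < n
  · exact hC2 j hj h
  · -- beyond `n` both halves of `sigFull` are `σlast`
    simpa [sigFull, hj, show ¬ j + 1 < n by omega] using h

theorem plSlope_eq_one_of_plVal_lt (hs : ∀ t, plSlope n σ σlast t = 1 ∨ plSlope n σ σlast t = -1)
    {t : ℕ} (h : plVal n σ σlast t < plVal n σ σlast (t + 1)) : plSlope n σ σlast t = 1 := by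
  refine (hs t).resolve_right fun hdown => ?_
  rw [plVal_succ, hdown] at h
  push_cast at h
  linarith

theorem exists_plVal_eq_intCast_add
    (hs : ∀ t, plSlope n σ σlast t = 1 ∨ plSlope n σ σlast t = -1) (t : ℕ) :
    ∃ z : ℤ, plVal n σ σlast t = z + ((t : ℝ) - 1) / 2 := by
  induction t with
  | zero => exact ⟨0, by norm_num [plVal]⟩
  | succ t ih =>
    obtain ⟨z, hz⟩ := ih
    rcases hs t with h | h
    · exact ⟨z, by rw [plVal_succ, hz, h]; push_cast; ring⟩
    · exact ⟨z - 1, by rw [plVal_succ, hz, h]; push_cast; ring⟩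

theorem exists_plVal_two_mul_add_one_eq_intCast
    (hs : ∀ t, plSlope n σ σlast t = 1 ∨ plSlope n σ σlast t = -1) (k : ℕ) :
    ∃ z : ℤ, plVal n σ σlast (2 * k + 1) = z := by
  obtain ⟨z, hz⟩ := exists_plVal_eq_intCast_add hs (2 * k + 1)
  exact ⟨z + k, by rw [hz]; push_cast; ring⟩

theorem plVal_two_mul_add_one_le_of_lt
    (hs : ∀ t, plSlope n σ σlast t = 1 ∨ plSlope n σ σlast t = -1) {k l : ℕ}
    (h : plVal n σ σlast (2 * k + 1) < plVal n σ σlast (2 * l + 1)) :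
    plVal n σ σlast (2 * k + 1) ≤ plVal n σ σlast (2 * l + 1) - 1 := by
  obtain ⟨a, ha⟩ := exists_plVal_two_mul_add_one_eq_intCast hs k
  obtain ⟨b, hb⟩ := exists_plVal_two_mul_add_one_eq_intCast hs l
  rw [ha, hb] at h ⊢
  have hab : a ≤ b - 1 := Int.le_sub_one_of_lt (by exact_mod_cast h)
  exact_mod_cast hab

theorem plVal_two_mul_le (hs : ∀ t, plSlope n σ σlast t = 1 ∨ plSlope n σ σlast t = -1)
    (hC1 : plSlope n σ σlast 0 = 1)
    (hC2 : ∀ j, plSlope n σ σlast (2 * j + 1) = 1 → plSlope n σ σlast (2 * j + 2) = 1)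
    {c : ℝ} {k : ℕ} (h : ∀ i ≤ k, plVal n σ σlast (2 * i + 1) ≤ c) :
    plVal n σ σlast (2 * k) ≤ c - 1 / 2 := by
  rcases hs (2 * k) with hup | hdown
  · have hk := h k le_rfl
    rw [plVal_succ, hup] at hk
    push_cast at hk
    linarith
  · obtain ⟨j, rfl⟩ : ∃ j, k = j + 1 :=
      Nat.exists_eq_succ_of_ne_zero fun hk => by simp_all
    have hj : plSlope n σ σlast (2 * j + 1) = -1 :=
      (hs _).resolve_left fun hup => by
        have := hC2 j hup
        rw [show 2 * j + 2 = 2 * (j + 1) by ring, hdown] at this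
        norm_num at this
    have hodd := h j (by omega)
    rw [show 2 * (j + 1) = 2 * j + 1 + 1 by ring, plVal_succ, hj]
    push_cast
    linarith

theorem plVal_one (hC1 : plSlope n σ σlast 0 = 1) : plVal n σ σlast 1 = 0 := by
  rw [plVal_succ, hC1]
  norm_num [plVal]

theorem plVal_le_before_first_max
    (hs : ∀ t, plSlope n σ σlast t = 1 ∨ plSlope n σ σlast t = -1)
    (hC1 : plSlope n σ σlast 0 = 1)
    (hC2 : ∀ j, plSlope n σ σlast (2 * j + 1) = 1 → plSlope n σ σlast (2 * j + 2) = 1)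
    {m : ℕ} (hlt : ∀ t < 2 * m + 1, plVal n σ σlast t < plVal n σ σlast (2 * m + 1))
    {k : ℕ} (hk : k < m) :
    plVal n σ σlast (2 * k + 1) ≤ plVal n σ σlast (2 * m + 1) - 1 ∧
      plVal n σ σlast (2 * k) ≤ plVal n σ σlast (2 * m + 1) - 3 / 2 := by
  have hodd : ∀ i ≤ k, plVal n σ σlast (2 * i + 1) ≤ plVal n σ σlast (2 * m + 1) - 1 :=
    fun i hi => plVal_two_mul_add_one_le_of_lt hs (hlt _ (by omega))
  have heven := plVal_two_mul_le hs hC1 hC2 hodd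
  exact ⟨hodd k le_rfl, by linarith⟩

theorem plSlope_eq_one_before_first_max
    (hs : ∀ t, plSlope n σ σlast t = 1 ∨ plSlope n σ σlast t = -1)
    (hC1 : plSlope n σ σlast 0 = 1)
    (hC2 : ∀ j, plSlope n σ σlast (2 * j + 1) = 1 → plSlope n σ σlast (2 * j + 2) = 1)
    {j : ℕ} (hlt : ∀ t < 2 * (j + 1) + 1,
      plVal n σ σlast t < plVal n σ σlast (2 * (j + 1) + 1)) :
    plSlope n σ σlast (2 * j) = 1 ∧ plSlope n σ σlast (2 * j + 1) = 1 ∧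
      plVal n σ σlast (2 * j + 1) = plVal n σ σlast (2 * (j + 1) + 1) - 1 := by
  obtain ⟨hodd, heven⟩ := plVal_le_before_first_max hs hC1 hC2 hlt (Nat.lt_succ_self j)
  have h2 := plSlope_eq_one_of_plVal_lt hs (hlt (2 * (j + 1)) (by omega))
  have hv2 : plVal n σ σlast (2 * (j + 1) + 1) = plVal n σ σlast (2 * (j + 1)) + 1 / 2 := by
    rw [plVal_succ, h2]
    norm_num
  have e : 2 * (j + 1) = 2 * j + 1 + 1 := by ring
  have h1 := plSlope_eq_one_of_plVal_lt hs (t := 2 * j + 1) (by rw [← e]; linarith)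
  have hv1 : plVal n σ σlast (2 * (j + 1)) = plVal n σ σlast (2 * j + 1) + 1 / 2 := by
    rw [e, plVal_succ, h1]
    norm_num
  have h0 := plSlope_eq_one_of_plVal_lt hs (t := 2 * j) (by linarith)
  exact ⟨h0, h1, by linarith⟩

theorem plFun_eq (x : ℝ) :
    plFun n σ σlast x = plVal n σ σlast ⌊2 * x⌋₊ +
      (2 * x - ⌊2 * x⌋₊) * (plVal n σ σlast (⌊2 * x⌋₊ + 1) - plVal n σ σlast ⌊2 * x⌋₊) := by
  rw [plVal_succ, plFun, Int.floor_toNat]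
  ring

theorem plFun_half (t : ℕ) : plFun n σ σlast ((t : ℝ) / 2) = plVal n σ σlast t := by
  rw [plFun_eq, mul_div_cancel₀ _ two_ne_zero, Nat.floor_natCast]
  ring

theorem plFun_le_of_plVal_le {c : ℝ} {T : ℕ} (h : ∀ t ≤ T, plVal n σ σlast t ≤ c) {x : ℝ}
    (hx0 : 0 ≤ x) (hxT : 2 * x ≤ T) : plFun n σ σlast x ≤ c := by
  set t := ⌊2 * x⌋₊ with ht
  have ht_le : (t : ℝ) ≤ 2 * x := Nat.floor_le (by positivity)
  have ht_lt : 2 * x < t + 1 := Nat.lt_floor_add_one _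
  have hvt : plVal n σ σlast t ≤ c := h t (by exact_mod_cast ht_le.trans hxT)
  rw [plFun_eq, ← ht]
  rcases ht_le.eq_or_lt with heq | hlt
  · rw [← heq, sub_self, zero_mul, add_zero]
    exact hvt
  · have htT : t < T := by exact_mod_cast hlt.trans_le hxT
    have hvt1 := h (t + 1) htT
    -- `g(x)` is a convex combination of `g(t/2)` and `g((t+1)/2)`
    nlinarith [mul_nonneg (sub_nonneg.2 ht_lt.le) (sub_nonneg.2 hvt),
      mul_nonneg (sub_nonneg.2 hlt.le) (sub_nonneg.2 hvt1)]

theorem plVal_eq_and_lt_of_isLeast {M : ℝ} {m : ℕ}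
    (hM : M ∈ upperBounds (plFun n σ σlast '' Set.Icc 0 ((n : ℝ) + 1/2)))
    (hm : IsLeast {x : ℝ | x ∈ Set.Icc (0 : ℝ) ((n : ℝ) + 1/2) ∧ plFun n σ σlast x = M}
      ((m : ℝ) + 1/2)) :
    plVal n σ σlast (2 * m + 1) = M ∧ ∀ t < 2 * m + 1, plVal n σ σlast t < M := by
  have hhalf : ((2 * m + 1 : ℕ) : ℝ) / 2 = (m : ℝ) + 1 / 2 := by push_cast; ring
  have hmem : ∀ t ≤ 2 * m + 1, (t : ℝ) / 2 ∈ Set.Icc (0 : ℝ) ((n : ℝ) + 1/2) := fun t ht =>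
    ⟨by positivity, le_trans (by rw [← hhalf]; gcongr) hm.1.1.2⟩
  refine ⟨by rw [← plFun_half, hhalf]; exact hm.1.2, fun t ht => ?_⟩
  refine (hM ⟨_, hmem t ht.le, plFun_half t⟩).lt_of_ne fun heq => ?_
  have hle := hm.2 ⟨hmem t ht.le, (plFun_half t).trans heq⟩
  rw [← hhalf] at hle
  have : ((2 * m + 1 : ℕ) : ℝ) ≤ t := by linarith
  have : 2 * m + 1 ≤ t := by exact_mod_cast this
  omega

/-- Under (C1), (C2): if `M = max g > 0` and `m + 1/2 = min g⁻¹(M)`, then `m > 0`,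
`σ_m = (1,1)`, `g(m - 1/2) = M - 1`, and `g(x) ≤ M - 1` for `0 ≤ x ≤ m - 1/2`. -/
theorem pl_before_first_max (n : ℕ) (σ : Fin n → ℤ × ℤ) (σlast : ℤ)
    (hσ : ∀ j : Fin n, ((σ j).1 = 1 ∨ (σ j).1 = -1) ∧ ((σ j).2 = 1 ∨ (σ j).2 = -1))
    (hlast : σlast = 1 ∨ σlast = -1)
    (hC1 : (sigFull n σ σlast 0).1 = 1)
    (hC2 : ∀ j < n, (sigFull n σ σlast j).2 = 1 → (sigFull n σ σlast (j + 1)).1 = 1)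
    (M : ℝ)
    (hM : IsGreatest (plFun n σ σlast '' Set.Icc 0 ((n : ℝ) + 1/2)) M)
    (hMpos : 0 < M)
    (m : ℕ)
    (hm : IsLeast {x : ℝ | x ∈ Set.Icc (0 : ℝ) ((n : ℝ) + 1/2) ∧ plFun n σ σlast x = M}
      ((m : ℝ) + 1/2)) :
    0 < m ∧ sigFull n σ σlast (m - 1) = (1, 1) ∧
      plFun n σ σlast ((m : ℝ) - 1/2) = M - 1 ∧
      ∀ x ∈ Set.Icc (0 : ℝ) ((m : ℝ) - 1/2), plFun n σ σlast x ≤ M - 1 := by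
  have hs := plSlope_eq_one_or_neg_one hσ hlast
  have hC1' : plSlope n σ σlast 0 = 1 := (plSlope_two_mul 0).trans hC1
  have hC2' := fun j => plSlope_two_mul_add_two_eq_one hC2 (j := j)
  obtain ⟨rfl, hbefore⟩ := plVal_eq_and_lt_of_isLeast hM.2 hm
  obtain ⟨j, rfl⟩ : ∃ j, m = j + 1 := Nat.exists_eq_succ_of_ne_zero fun hm0 => by
    subst hm0
    simp [plVal_one hC1'] at hMpos
  obtain ⟨h0, h1, hv⟩ := plSlope_eq_one_before_first_max hs hC1' hC2' hbefore
  have hhalf : ((j + 1 : ℕ) : ℝ) - 1 / 2 = ((2 * j + 1 : ℕ) : ℝ) / 2 := by push_cast; ring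
  refine ⟨j.succ_pos, ?_, by rw [hhalf, plFun_half, hv], fun x hx => ?_⟩
  · rw [Nat.add_sub_cancel, Prod.ext_iff, ← plSlope_two_mul, ← plSlope_two_mul_add_one]
    exact ⟨h0, h1⟩
  refine plFun_le_of_plVal_le (T := 2 * j + 1) (fun t ht => ?_) hx.1 (by
    have := hx.2; rw [hhalf] at this; linarith)
  obtain ⟨k, rfl | rfl⟩ := Nat.even_or_odd' t
  · have := (plVal_le_before_first_max hs hC1' hC2' hbefore (k := k) (by omega)).2
    linarith
  · exact (plVal_le_before_first_max hs hC1' hC2' hbefore (k := k) (by omega)).1
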